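/- (Theorem 1, two-cell case, algebraic form.) Let β₁ > 0, β₂ > 0, ε ≥ 0. Define φ = β₁²/(ε + β₁ + β₂), a = φ β₂/β₁, λ = (β₁ − φ)² + a², and the limiting coefficients from Lemma 1 of group-blind detection: the desired-signal coefficient c₁ = φ, the pilot-sharing-interferer coefficient c₂ = a − a³/λ, and the estimation-error coefficient c₃ = a²(β₁ − φ)/λ. Then the resulting asymptotic SINR satisfies c₁²/(c₂² + c₃²) = [1 + 1/(1 + ε/β₂)²] · (β₁/β₂)². -/

import Mathlib

/-!
Write `u = β₁ - φ` for the estimation-error gain, so that `λ = u² + a²`. Then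
`c₂ = a u² / λ` and `c₃ = a² u / λ`, whence `c₂² + c₃² = a² u² / λ` and the SINR is
`φ² λ / (a² u²) = (φ / a)² + (φ / u)²`. For the MMSE coefficient, `φ / a = β₁ / β₂` and
`φ / u = β₁ / (ε + β₂)`, which gives the closed form.
-/

section GroupBlind

variable {K : Type*} [Field K]

theorem groupBlind_interference_power {u a : K} (hlam : u ^ 2 + a ^ 2 ≠ 0) :
    (a - a ^ 3 / (u ^ 2 + a ^ 2)) ^ 2 + (a ^ 2 * u / (u ^ 2 + a ^ 2)) ^ 2 =
      a ^ 2 * u ^ 2 / (u ^ 2 + a ^ 2) := by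
  have hc₂ : a - a ^ 3 / (u ^ 2 + a ^ 2) = a * u ^ 2 / (u ^ 2 + a ^ 2) := by
    field_simp
    ring
  rw [hc₂]
  field_simp

theorem groupBlind_sinr_eq {φ u a : K} (hu : u ≠ 0) (ha : a ≠ 0) (hlam : u ^ 2 + a ^ 2 ≠ 0) :
    φ ^ 2 / ((a - a ^ 3 / (u ^ 2 + a ^ 2)) ^ 2 + (a ^ 2 * u / (u ^ 2 + a ^ 2)) ^ 2) =
      (φ / a) ^ 2 + (φ / u) ^ 2 := by
  rw [groupBlind_interference_power hlam]
  field_simp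

theorem sub_sq_div_eq {β₁ β₂ ε : K} (hs : ε + β₁ + β₂ ≠ 0) :
    β₁ - β₁ ^ 2 / (ε + β₁ + β₂) = β₁ * (ε + β₂) / (ε + β₁ + β₂) := by
  field_simp
  ring

end GroupBlind

/-- Theorem 1 (two-cell case, algebraic form): with the limiting coefficients
`c₁ = φ`, `c₂ = a − a³/λ`, `c₃ = a²(β₁ − φ)/λ` of the group-blind detector,
where `φ = β₁²/(ε + β₁ + β₂)`, `a = φβ₂/β₁`, `λ = (β₁ − φ)² + a²`, the
asymptotic SINR equals `[1 + 1/(1 + ε/β₂)²] (β₁/β₂)²`. -/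
theorem groupblind_SINR_two_cells
    (β₁ β₂ ε : ℝ) (hβ₁ : 0 < β₁) (hβ₂ : 0 < β₂) (hε : 0 ≤ ε)
    (φ a lam c₁ c₂ c₃ : ℝ)
    (hφ : φ = β₁ ^ 2 / (ε + β₁ + β₂))
    (ha : a = φ * β₂ / β₁)
    (hlam : lam = (β₁ - φ) ^ 2 + a ^ 2)
    (hc₁ : c₁ = φ)
    (hc₂ : c₂ = a - a ^ 3 / lam)
    (hc₃ : c₃ = a ^ 2 * (β₁ - φ) / lam) :
    c₁ ^ 2 / (c₂ ^ 2 + c₃ ^ 2) =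
      (1 + 1 / (1 + ε / β₂) ^ 2) * (β₁ / β₂) ^ 2 := by
  subst c₁ c₂ c₃ lam
  have hs : 0 < ε + β₁ + β₂ := by linarith
  have he : 0 < ε + β₂ := by linarith
  have hφ₀ : 0 < φ := by rw [hφ]; positivity
  have hu : β₁ - φ = β₁ * (ε + β₂) / (ε + β₁ + β₂) := hφ ▸ sub_sq_div_eq hs.ne'
  have hu₀ : β₁ - φ ≠ 0 := by rw [hu]; positivity
  have ha₀ : a ≠ 0 := by rw [ha]; positivity
  have hφa : φ / a = β₁ / β₂ := by
    rw [ha]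
    field_simp
  have hφu : φ / (β₁ - φ) = β₁ / (ε + β₂) := by
    rw [hu, hφ]
    field_simp
  rw [groupBlind_sinr_eq hu₀ ha₀ (by positivity), hφa, hφu]
  field_simp
  ring
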